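/- arXiv:0805.4502 — 2 statements merged into one kernel-verified Lean document; each statement's English description precedes it below -/
import Mathlib

section
/- For every nonzero element W of the order 𝒪, |det(W)| ≥ 1, and consequently ‖W‖_F² ≥ 2. -/
/-!
Write `W = [[w₁, w₂], [i w̄₂, w̄₁]]`, so that `det W = N(w₁) - i N(w₂)` with `N(w) = w w̄`, a Gaussian
integer. It therefore suffices to show `det W ≠ 0`, and then `2 |det W| ≤ ‖W‖_F²` by AM-GM.
If `N(w₁) = i N(w₂)`, reduce modulo the prime `√5` of `ℤ[θ]`: the residue field is `𝔽₅`, where `i`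
becomes `2` or `3`, neither of which is a square, so `√5` divides the four `ℤ[θ]`-coordinates of
`w₁, w₂`. Dividing them by `√5` preserves the relation and divides their size by `5`, so by
infinite descent `w₁ = w₂ = 0`.
-/

open Matrix

/-- The golden number θ = (1+√5)/2, as a complex number. -/
noncomputable def gold : ℂ := (1 + Real.sqrt 5) / 2

/-- Squared Frobenius norm of a 2×2 complex matrix. -/
noncomputable def fro2 (M : Matrix (Fin 2) (Fin 2) ℂ) : ℝ :=
  ∑ i, ∑ j, ‖M i j‖ ^ 2

/-- The element `a + bθ + i(c + dθ)` of `ℤ[i,θ]`. -/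
noncomputable def zit (a b c d : ℤ) : ℂ :=
  (a : ℂ) + b * gold + Complex.I * ((c : ℂ) + d * gold)

/-- Its conjugate under `θ ↦ 1 − θ`. -/
noncomputable def zitBar (a b c d : ℤ) : ℂ :=
  (a : ℂ) + b * (1 - gold) + Complex.I * ((c : ℂ) + d * (1 - gold))

/-- The matrix `[[w₁, w₂], [i·w̄₂, w̄₁]]` of the order `𝒪`, with
`w₁ = a + bθ + i(c+dθ)` and `w₂ = e + fθ + i(g+hθ)`. -/
noncomputable def Omat (a b c d e f g h : ℤ) : Matrix (Fin 2) (Fin 2) ℂ :=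
  !![zit a b c d, zit e f g h;
     Complex.I * zitBar e f g h, zitBar a b c d]

/-- Membership in the order `𝒪`. -/
def inO (W : Matrix (Fin 2) (Fin 2) ℂ) : Prop :=
  ∃ a b c d e f g h : ℤ, W = Omat a b c d e f g h

/-- `α = 1 + i·θ̄ = 1 + i(1−θ)`. -/
noncomputable def alphaG : ℂ := 1 + Complex.I * (1 - gold)

/-- `ᾱ = 1 + i·θ`. -/
noncomputable def alphaBarG : ℂ := 1 + Complex.I * gold

/-- `A = diag(α, ᾱ)`. -/
noncomputable def Amat : Matrix (Fin 2) (Fin 2) ℂ := !![alphaG, 0; 0, alphaBarG]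

/-- Membership in the Golden Code `𝒢 = (1/√5)·A·𝒪`. -/
def inG (X : Matrix (Fin 2) (Fin 2) ℂ) : Prop :=
  ∃ W, inO W ∧ X = ((Real.sqrt 5 : ℂ))⁻¹ • (Amat * W)

lemma gold_sq : gold ^ 2 = gold + 1 := by
  have h5 : ((Real.sqrt 5 : ℝ) : ℂ) ^ 2 = 5 := by
    exact_mod_cast congrArg Complex.ofReal (Real.sq_sqrt (by norm_num : (0 : ℝ) ≤ 5))
  unfold gold
  linear_combination (1 / 4 : ℂ) * h5

/-! A pair `x : ℤ × ℤ` stands for `x.1 + x.2 θ ∈ ℤ[θ]`. -/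

namespace GoldenInt

/-- The norm `x x̄` of `ℤ[θ]`. -/
def norm (x : ℤ × ℤ) : ℤ := x.1 ^ 2 + x.1 * x.2 - x.2 ^ 2

/-- The trace `x ȳ + x̄ y`. -/
def traceMulConj (x y : ℤ × ℤ) : ℤ :=
  2 * x.1 * y.1 + x.1 * y.2 + x.2 * y.1 - 2 * x.2 * y.2

/-- Multiplication by `√5 = 2θ - 1`. -/
def mulSqrtFive (x : ℤ × ℤ) : ℤ × ℤ := (-x.1 + 2 * x.2, 2 * x.1 + x.2)

/-- Reduction modulo the prime `√5`, under which `θ ↦ 3`. -/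
def residue (x : ℤ × ℤ) : ZMod 5 := x.1 + 3 * x.2

def sumSq (x : ℤ × ℤ) : ℤ := x.1 ^ 2 + x.2 ^ 2

/-- Real and imaginary parts of `det [[x + iy, u + iv], [i(ū + iv̄), x̄ + iȳ]]`. -/
def detRe (x y u v : ℤ × ℤ) : ℤ := norm x - norm y + traceMulConj u v

def detIm (x y u v : ℤ × ℤ) : ℤ := traceMulConj x y - norm u + norm v

lemma norm_mulSqrtFive (x : ℤ × ℤ) : norm (mulSqrtFive x) = -5 * norm x := by
  simp only [norm, mulSqrtFive]; ring

lemma traceMulConj_mulSqrtFive (x y : ℤ × ℤ) :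
    traceMulConj (mulSqrtFive x) (mulSqrtFive y) = -5 * traceMulConj x y := by
  simp only [traceMulConj, mulSqrtFive]; ring

lemma sumSq_mulSqrtFive (x : ℤ × ℤ) : sumSq (mulSqrtFive x) = 5 * sumSq x := by
  simp only [sumSq, mulSqrtFive]; ring

lemma sumSq_nonneg (x : ℤ × ℤ) : 0 ≤ sumSq x := by
  unfold sumSq; positivity

lemma eq_zero_of_sumSq_nonpos {x : ℤ × ℤ} (h : sumSq x ≤ 0) : x = 0 := by
  unfold sumSq at h
  ext <;> simp only [Prod.fst_zero, Prod.snd_zero] <;> nlinarith [sq_nonneg x.1, sq_nonneg x.2]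

lemma detRe_mulSqrtFive (x y u v : ℤ × ℤ) :
    detRe (mulSqrtFive x) (mulSqrtFive y) (mulSqrtFive u) (mulSqrtFive v) =
      -5 * detRe x y u v := by
  simp only [detRe, norm_mulSqrtFive, traceMulConj_mulSqrtFive]; ring

lemma detIm_mulSqrtFive (x y u v : ℤ × ℤ) :
    detIm (mulSqrtFive x) (mulSqrtFive y) (mulSqrtFive u) (mulSqrtFive v) =
      -5 * detIm x y u v := by
  simp only [detIm, norm_mulSqrtFive, traceMulConj_mulSqrtFive]; ring

lemma five_eq_zero : (5 : ZMod 5) = 0 := by decide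

lemma norm_cast_zmod_five (x : ℤ × ℤ) : (norm x : ZMod 5) = residue x ^ 2 := by
  simp only [norm, residue]; push_cast
  linear_combination (-(x.1 * x.2 : ZMod 5) - 2 * x.2 ^ 2) * five_eq_zero

lemma traceMulConj_cast_zmod_five (x y : ℤ × ℤ) :
    (traceMulConj x y : ZMod 5) = 2 * residue x * residue y := by
  simp only [traceMulConj, residue]; push_cast
  linear_combination (-(x.1 * y.2 : ZMod 5) - x.2 * y.1 - 4 * x.2 * y.2) * five_eq_zero

lemma exists_mulSqrtFive_eq_of_residue_eq_zero {x : ℤ × ℤ} (h : residue x = 0) :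
    ∃ x', mulSqrtFive x' = x := by
  have h5 : (5 : ℤ) ∣ x.1 + 3 * x.2 := by
    apply (ZMod.intCast_zmod_eq_zero_iff_dvd _ 5).mp; push_cast; exact h
  obtain ⟨k, hk⟩ := h5
  exact ⟨(x.2 - k, 2 * k - x.2), by ext <;> simp only [mulSqrtFive] <;> omega⟩

/-- `i` is not a norm modulo `√5`: in `𝔽₅[i] ≅ 𝔽₅ × 𝔽₅` this says that neither `2` nor `3` is a
square mod `5`. -/
lemma zmod_five_anisotropic : ∀ X Y U V : ZMod 5, X ^ 2 - Y ^ 2 + 2 * U * V = 0 →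
    2 * X * Y - U ^ 2 + V ^ 2 = 0 → X = 0 ∧ Y = 0 ∧ U = 0 ∧ V = 0 := by
  decide

lemma residue_eq_zero_of_det_eq_zero {x y u v : ℤ × ℤ}
    (hRe : detRe x y u v = 0) (hIm : detIm x y u v = 0) :
    residue x = 0 ∧ residue y = 0 ∧ residue u = 0 ∧ residue v = 0 := by
  have hRe5 := congrArg (Int.cast : ℤ → ZMod 5) hRe
  have hIm5 := congrArg (Int.cast : ℤ → ZMod 5) hIm
  simp only [detRe, detIm, Int.cast_add, Int.cast_sub, Int.cast_zero, norm_cast_zmod_five,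
    traceMulConj_cast_zmod_five] at hRe5 hIm5
  exact zmod_five_anisotropic _ _ _ _ (by linear_combination hRe5) (by linear_combination hIm5)

lemma exists_mulSqrtFive_of_det_eq_zero {x y u v : ℤ × ℤ}
    (hRe : detRe x y u v = 0) (hIm : detIm x y u v = 0) :
    ∃ x' y' u' v', mulSqrtFive x' = x ∧ mulSqrtFive y' = y ∧ mulSqrtFive u' = u ∧
      mulSqrtFive v' = v ∧ detRe x' y' u' v' = 0 ∧ detIm x' y' u' v' = 0 := by
  obtain ⟨hx, hy, hu, hv⟩ := residue_eq_zero_of_det_eq_zero hRe hIm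
  obtain ⟨x', rfl⟩ := exists_mulSqrtFive_eq_of_residue_eq_zero hx
  obtain ⟨y', rfl⟩ := exists_mulSqrtFive_eq_of_residue_eq_zero hy
  obtain ⟨u', rfl⟩ := exists_mulSqrtFive_eq_of_residue_eq_zero hu
  obtain ⟨v', rfl⟩ := exists_mulSqrtFive_eq_of_residue_eq_zero hv
  rw [detRe_mulSqrtFive] at hRe
  rw [detIm_mulSqrtFive] at hIm
  exact ⟨x', y', u', v', rfl, rfl, rfl, rfl, by omega, by omega⟩

/-- Infinite descent: dividing by `√5` divides the size `sumSq` by `5`. -/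
lemma eq_zero_of_det_eq_zero_of_sumSq_le (n : ℕ) {x y u v : ℤ × ℤ}
    (hn : sumSq x + sumSq y + sumSq u + sumSq v ≤ n)
    (hRe : detRe x y u v = 0) (hIm : detIm x y u v = 0) :
    x = 0 ∧ y = 0 ∧ u = 0 ∧ v = 0 := by
  induction n generalizing x y u v with
  | zero =>
    have := sumSq_nonneg x; have := sumSq_nonneg y
    have := sumSq_nonneg u; have := sumSq_nonneg v
    exact ⟨eq_zero_of_sumSq_nonpos (by omega), eq_zero_of_sumSq_nonpos (by omega),
      eq_zero_of_sumSq_nonpos (by omega), eq_zero_of_sumSq_nonpos (by omega)⟩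
  | succ n ih =>
    obtain ⟨x', y', u', v', rfl, rfl, rfl, rfl, hRe', hIm'⟩ :=
      exists_mulSqrtFive_of_det_eq_zero hRe hIm
    simp only [sumSq_mulSqrtFive] at hn
    have := sumSq_nonneg x'; have := sumSq_nonneg y'
    have := sumSq_nonneg u'; have := sumSq_nonneg v'
    obtain ⟨rfl, rfl, rfl, rfl⟩ := ih (by push_cast at hn ⊢; omega) hRe' hIm'
    exact ⟨rfl, rfl, rfl, rfl⟩

lemma eq_zero_of_det_eq_zero {x y u v : ℤ × ℤ}
    (hRe : detRe x y u v = 0) (hIm : detIm x y u v = 0) :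
    x = 0 ∧ y = 0 ∧ u = 0 ∧ v = 0 :=
  eq_zero_of_det_eq_zero_of_sumSq_le _ (Int.self_le_toNat _) hRe hIm

end GoldenInt

lemma zit_mul_zitBar (a b c d : ℤ) :
    zit a b c d * zitBar a b c d =
      ((GoldenInt.norm (a, b) - GoldenInt.norm (c, d) : ℤ) : ℂ) +
        (GoldenInt.traceMulConj (a, b) (c, d) : ℂ) * Complex.I := by
  simp only [zit, zitBar, GoldenInt.norm, GoldenInt.traceMulConj]
  push_cast
  linear_combination ((d : ℂ) ^ 2 - b ^ 2 - 2 * b * d * Complex.I) * gold_sq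
    + ((c + d * gold) * (c + d * (1 - gold))) * Complex.I_sq

lemma det_Omat (a b c d e f g h : ℤ) :
    (Omat a b c d e f g h).det =
      (GoldenInt.detRe (a, b) (c, d) (e, f) (g, h) : ℂ) +
        (GoldenInt.detIm (a, b) (c, d) (e, f) (g, h) : ℂ) * Complex.I := by
  have h₁ := zit_mul_zitBar a b c d
  have h₂ := zit_mul_zitBar e f g h
  rw [Omat, Matrix.det_fin_two_of]
  simp only [GoldenInt.detRe, GoldenInt.detIm] at h₁ h₂ ⊢
  push_cast at h₁ h₂ ⊢
  linear_combination h₁ - Complex.I * h₂ - (GoldenInt.traceMulConj (e, f) (g, h) : ℂ) * Complex.I_sq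

lemma Omat_zero : Omat 0 0 0 0 0 0 0 0 = 0 := by
  ext i j
  fin_cases i <;> fin_cases j <;> simp [Omat, zit, zitBar]

lemma one_le_norm_intCast_add_intCast_mul_I {p q : ℤ} (h : p ≠ 0 ∨ q ≠ 0) :
    1 ≤ ‖(p : ℂ) + q * Complex.I‖ := by
  have hpq : (1 : ℤ) ≤ p ^ 2 + q ^ 2 := by
    rcases h with h | h <;> nlinarith [sq_nonneg p, sq_nonneg q, Int.one_le_abs h, sq_abs p, sq_abs q]
  have : ((p : ℝ) : ℂ) + ((q : ℝ) : ℂ) * Complex.I = (p : ℂ) + q * Complex.I := by push_cast; rfl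
  rw [← this, Complex.norm_add_mul_I, Real.one_le_sqrt]
  exact_mod_cast hpq

lemma two_mul_norm_det_le_fro2 (M : Matrix (Fin 2) (Fin 2) ℂ) : 2 * ‖M.det‖ ≤ fro2 M := by
  have hdet : ‖M.det‖ ≤ ‖M 0 0‖ * ‖M 1 1‖ + ‖M 0 1‖ * ‖M 1 0‖ := by
    rw [Matrix.det_fin_two, ← norm_mul, ← norm_mul]
    exact norm_sub_le _ _
  have hfro : fro2 M = ‖M 0 0‖ ^ 2 + ‖M 0 1‖ ^ 2 + ‖M 1 0‖ ^ 2 + ‖M 1 1‖ ^ 2 := by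
    simp only [fro2, Fin.sum_univ_two]; ring
  rw [hfro]
  nlinarith [sq_nonneg (‖M 0 0‖ - ‖M 1 1‖), sq_nonneg (‖M 0 1‖ - ‖M 1 0‖)]

/-- Every nonzero element `W` of the order `𝒪` satisfies `|det W| ≥ 1`, and
consequently `‖W‖_F² ≥ 2`. -/
theorem det_O_ge_one (W : Matrix (Fin 2) (Fin 2) ℂ) (hW : inO W) (h0 : W ≠ 0) :
    1 ≤ ‖W.det‖ ∧ 2 ≤ fro2 W := by
  obtain ⟨a, b, c, d, e, f, g, h, rfl⟩ := hW
  have hdet : GoldenInt.detRe (a, b) (c, d) (e, f) (g, h) ≠ 0 ∨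
      GoldenInt.detIm (a, b) (c, d) (e, f) (g, h) ≠ 0 := by
    by_contra! hdet
    have hzero := GoldenInt.eq_zero_of_det_eq_zero hdet.1 hdet.2
    simp only [Prod.mk_eq_zero] at hzero
    obtain ⟨⟨rfl, rfl⟩, ⟨rfl, rfl⟩, ⟨rfl, rfl⟩, ⟨rfl, rfl⟩⟩ := hzero
    exact h0 Omat_zero
  have h1 : 1 ≤ ‖(Omat a b c d e f g h).det‖ := by
    rw [det_Omat]; exact one_le_norm_intCast_add_intCast_mul_I hdet
  exact ⟨h1, by linarith [two_mul_norm_det_le_fro2 (Omat a b c d e f g h)]⟩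
end

section
/- The quotient ring 𝒪/(1+i)𝒪 is isomorphic to the ring M₂(𝔽₂) of 2×2 matrices over 𝔽₂; an isomorphism is determined by [1] ↦ I, [θ] ↦ [[0,1],[1,1]], [j] ↦ [[0,1],[1,0]], [θj] ↦ [[0,1],[1,1]]·[[0,1],[1,0]]. -/
open Matrix

/-- The matrix of `θ` under the embedding of the quaternion algebra in `M₂(ℂ)`. -/
noncomputable def Tmat : Matrix (Fin 2) (Fin 2) ℂ := !![gold, 0; 0, 1 - gold]

/-- The matrix of `j` (with `j² = i`, `jx = x̄j`). -/
noncomputable def Jmat : Matrix (Fin 2) (Fin 2) ℂ := !![0, 1; Complex.I, 0]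

/-- The matrix of the central element `i`. -/
noncomputable def iOne : Matrix (Fin 2) (Fin 2) ℂ := Complex.I • (1 : Matrix (Fin 2) (Fin 2) ℂ)

/-- The order `𝒪 = ℤ[i,θ] ⊕ ℤ[i,θ]j`, as the subring of `M₂(ℂ)` generated by
`i·𝟙`, `θ` and `j`. -/
noncomputable def OO : Subring (Matrix (Fin 2) (Fin 2) ℂ) :=
  Subring.closure {iOne, Tmat, Jmat}

/-! The order `𝒪` is free over `ℤ[i]` on `1, θ, j, θj`, with multiplication table determined by
`θ² = θ + 1`, `j² = i`, `jθ = (1 - θ)j`. Since `ℤ[i]/(1+i) = 𝔽₂` with `i ↦ 1`, reducing coordinates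
mod `1 + i` yields the same table with `j² = 1`; the matrices `T = [[0,1],[1,1]]` and
`J = [[0,1],[1,0]]` satisfy it, and `1, T, J, TJ` is an `𝔽₂`-basis of `M₂(𝔽₂)`. Hence the reduction
is a surjective ring map whose kernel consists of the elements with all coordinates divisible
by `1 + i`, i.e. `(1+i)𝒪`. -/

open GaussianInt Zsqrtd

local notation "ℤ[i]" => GaussianInt

section Coords

variable {K L : Type*} [CommRing K] [CommRing L]

abbrev Coords (K : Type*) := K × K × K × K

/-- Product of `A + Bθ + Cj + Dθj` and `a + bθ + cj + dθj` in an algebra over `K` in which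
`θ² = θ + 1`, `j² = ε` and `jθ = (1 - θ)j`. -/
def quatMul (ε : K) : Coords K → Coords K → Coords K
  | (A, B, C, D), (a, b, c, d) =>
    (A * a + B * b + ε * (C * c + C * d - D * d), A * b + B * a + B * b + ε * (D * c - C * d),
      A * c + B * d + C * a + C * b - D * b, A * d + B * c + B * d - C * b + D * a)

def mapCoords (f : K →+* L) : Coords K → Coords L
  | (a, b, c, d) => (f a, f b, f c, f d)

lemma mapCoords_add (f : K →+* L) (q q' : Coords K) :
    mapCoords f (q + q') = mapCoords f q + mapCoords f q' := by
  simp only [mapCoords, map_add, Prod.mk_add_mk]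

lemma mapCoords_smul (f : K →+* L) (t : K) (q : Coords K) :
    mapCoords f (t • q) = f t • mapCoords f q := by
  simp only [mapCoords, Prod.smul_fst, Prod.smul_snd, smul_eq_mul, map_mul, Prod.smul_mk]

lemma mapCoords_quatMul (f : K →+* L) (ε : K) (q q' : Coords K) :
    mapCoords f (quatMul ε q q') = quatMul (f ε) (mapCoords f q) (mapCoords f q') := by
  simp only [mapCoords, quatMul, map_add, map_sub, map_mul]

lemma mapCoords_surjective {f : K →+* L} (hf : Function.Surjective f) :
    Function.Surjective (mapCoords f) := by
  rintro ⟨a, b, c, d⟩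
  obtain ⟨a', rfl⟩ := hf a
  obtain ⟨b', rfl⟩ := hf b
  obtain ⟨c', rfl⟩ := hf c
  obtain ⟨d', rfl⟩ := hf d
  exact ⟨(a', b', c', d'), rfl⟩

end Coords

namespace GaussianInt

def toZModTwo : ℤ[i] →+* ZMod 2 := Zsqrtd.lift ⟨1, by decide⟩

lemma toZModTwo_sqrtd : toZModTwo sqrtd = 1 := by
  simp [toZModTwo]

lemma toZModTwo_surjective : Function.Surjective toZModTwo := by
  intro α
  fin_cases α
  exacts [⟨0, map_zero _⟩, ⟨1, map_one _⟩]

lemma toZModTwo_eq_zero_iff {a : ℤ[i]} : toZModTwo a = 0 ↔ 1 + sqrtd ∣ a := by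
  constructor
  · intro h
    have h2 : (2 : ℤ) ∣ a.re + a.im := by
      refine (ZMod.intCast_zmod_eq_zero_iff_dvd _ 2).1 ?_
      simpa [toZModTwo] using h
    refine ⟨⟨(a.re + a.im) / 2, (a.im - a.re) / 2⟩, Zsqrtd.ext ?_ ?_⟩ <;>
      simp only [re_mul, re_add, re_one, re_sqrtd, im_mul, im_add, im_one, im_sqrtd] <;> omega
  · rintro ⟨b, rfl⟩
    rw [map_mul, map_add, map_one, toZModTwo_sqrtd]
    exact zero_mul _

lemma toComplex_sqrtd : toComplex sqrtd = Complex.I := by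
  simp [toComplex]

end GaussianInt

lemma gold_mul_gold : gold * gold = gold + 1 := by
  have h : (Real.sqrt 5 : ℂ) * Real.sqrt 5 = 5 := by
    rw [← Complex.ofReal_mul, Real.mul_self_sqrt (by norm_num)]
    norm_num
  unfold gold
  linear_combination h / 4

lemma two_mul_gold_sub_one_ne_zero : 2 * gold - 1 ≠ 0 := by
  have h : 2 * gold - 1 = (Real.sqrt 5 : ℂ) := by unfold gold; ring
  rw [h, Complex.ofReal_ne_zero]
  positivity

lemma eq_and_eq_of_add_mul_gold {x y x' y' : ℂ} (h₁ : x + y * gold = x' + y' * gold)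
    (h₂ : x + y * (1 - gold) = x' + y' * (1 - gold)) : x = x' ∧ y = y' := by
  have hy : (y - y') * (2 * gold - 1) = 0 := by linear_combination h₁ - h₂
  obtain rfl : y = y' :=
    sub_eq_zero.1 ((mul_eq_zero.1 hy).resolve_right two_mul_gold_sub_one_ne_zero)
  exact ⟨by linear_combination h₁, rfl⟩

noncomputable def ofCoords : Coords ℤ[i] → Matrix (Fin 2) (Fin 2) ℂ
  | (a, b, c, d) => (a : ℂ) • 1 + (b : ℂ) • Tmat + (c : ℂ) • Jmat + (d : ℂ) • (Tmat * Jmat)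

lemma ofCoords_eq (a b c d : ℤ[i]) :
    ofCoords (a, b, c, d) = !![(a : ℂ) + b * gold, (c : ℂ) + d * gold;
      Complex.I * (c + d * (1 - gold)), (a : ℂ) + b * (1 - gold)] := by
  ext i j
  fin_cases i <;> fin_cases j <;> simp [ofCoords, Tmat, Jmat]
  ring

lemma ofCoords_injective : Function.Injective ofCoords := by
  rintro ⟨a, b, c, d⟩ ⟨a', b', c', d'⟩ h
  rw [ofCoords_eq, ofCoords_eq] at h
  have h₀₀ := congrFun₂ h 0 0
  have h₀₁ := congrFun₂ h 0 1
  have h₁₀ := congrFun₂ h 1 0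
  have h₁₁ := congrFun₂ h 1 1
  simp only [Matrix.of_apply, Matrix.cons_val', Matrix.cons_val_zero, Matrix.cons_val_one,
    Matrix.empty_val', Matrix.cons_val_fin_one] at h₀₀ h₀₁ h₁₀ h₁₁
  obtain ⟨ha, hb⟩ := eq_and_eq_of_add_mul_gold h₀₀ h₁₁
  obtain ⟨hc, hd⟩ := eq_and_eq_of_add_mul_gold h₀₁ (mul_left_cancel₀ Complex.I_ne_zero h₁₀)
  simp only [toComplex_inj] at ha hb hc hd
  rw [ha, hb, hc, hd]

lemma ofCoords_add (q q' : Coords ℤ[i]) : ofCoords (q + q') = ofCoords q + ofCoords q' := by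
  simp only [ofCoords, map_add, add_smul]
  abel

lemma ofCoords_neg (q : Coords ℤ[i]) : ofCoords (-q) = -ofCoords q := by
  simp only [ofCoords, map_neg, neg_smul]
  abel

lemma ofCoords_smul (t : ℤ[i]) (q : Coords ℤ[i]) : ofCoords (t • q) = (t : ℂ) • ofCoords q := by
  simp only [ofCoords, Prod.smul_fst, Prod.smul_snd, smul_eq_mul, map_mul, mul_smul, smul_add]

lemma ofCoords_mul (q q' : Coords ℤ[i]) :
    ofCoords q * ofCoords q' = ofCoords (quatMul sqrtd q q') := by
  obtain ⟨A, B, C, D⟩ := q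
  obtain ⟨a, b, c, d⟩ := q'
  simp only [quatMul, ofCoords_eq]
  ext i j
  fin_cases i <;> fin_cases j <;>
    simp only [Matrix.mul_apply, Fin.sum_univ_two, of_apply, cons_val', cons_val_zero, cons_val_one,
      cons_val_fin_one, Fin.isValue, Fin.zero_eta, Fin.mk_one, map_add, map_sub, map_mul,
      toComplex_sqrtd]
  · linear_combination ((B : ℂ) * b - Complex.I * D * d) * gold_mul_gold
  · linear_combination ((B : ℂ) * d - D * b) * gold_mul_gold
  · linear_combination Complex.I * ((B : ℂ) * d - D * b) * gold_mul_gold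
  · linear_combination ((B : ℂ) * b - Complex.I * D * d) * gold_mul_gold

lemma ofCoords_zero : ofCoords 0 = 0 := by simp [ofCoords]

lemma ofCoords_one : ofCoords (1, 0, 0, 0) = 1 := by simp [ofCoords]

lemma ofCoords_iOne : ofCoords (sqrtd, 0, 0, 0) = iOne := by simp [ofCoords, iOne, toComplex_sqrtd]

lemma ofCoords_Tmat : ofCoords (0, 1, 0, 0) = Tmat := by simp [ofCoords]

lemma ofCoords_Jmat : ofCoords (0, 0, 1, 0) = Jmat := by simp [ofCoords]

lemma ofCoords_Tmat_mul_Jmat : ofCoords (0, 0, 0, 1) = Tmat * Jmat := by simp [ofCoords]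

lemma iOne_mem_OO : iOne ∈ OO := Subring.subset_closure (by simp)

lemma Tmat_mem_OO : Tmat ∈ OO := Subring.subset_closure (by simp)

lemma Jmat_mem_OO : Jmat ∈ OO := Subring.subset_closure (by simp)

lemma toComplex_smul_mem_OO (t : ℤ[i]) {M : Matrix (Fin 2) (Fin 2) ℂ} (hM : M ∈ OO) :
    (t : ℂ) • M ∈ OO := by
  have h : (t : ℂ) • M = t.re • M + t.im • (iOne * M) := by
    rw [toComplex_def, add_smul, mul_smul, iOne, smul_mul_assoc, one_mul, Int.cast_smul_eq_zsmul,
      Int.cast_smul_eq_zsmul]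
  rw [h]
  exact add_mem (zsmul_mem hM _) (zsmul_mem (mul_mem iOne_mem_OO hM) _)

lemma ofCoords_mem_OO (q : Coords ℤ[i]) : ofCoords q ∈ OO := by
  obtain ⟨a, b, c, d⟩ := q
  refine add_mem (add_mem (add_mem ?_ ?_) ?_) ?_ <;> apply toComplex_smul_mem_OO
  exacts [one_mem _, Tmat_mem_OO, Jmat_mem_OO, mul_mem Tmat_mem_OO Jmat_mem_OO]

lemma mem_OO_iff {M : Matrix (Fin 2) (Fin 2) ℂ} : M ∈ OO ↔ ∃ q, ofCoords q = M := by
  refine ⟨fun hM => ?_, fun ⟨q, hq⟩ => hq ▸ ofCoords_mem_OO q⟩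
  induction hM using Subring.closure_induction with
  | mem M hM =>
    rcases hM with rfl | rfl | rfl
    exacts [⟨_, ofCoords_iOne⟩, ⟨_, ofCoords_Tmat⟩, ⟨_, ofCoords_Jmat⟩]
  | zero => exact ⟨0, ofCoords_zero⟩
  | one => exact ⟨_, ofCoords_one⟩
  | add M N _ _ hM hN =>
    obtain ⟨⟨q, rfl⟩, ⟨q', rfl⟩⟩ := And.intro hM hN
    exact ⟨q + q', ofCoords_add q q'⟩
  | neg M _ hM =>
    obtain ⟨q, rfl⟩ := hM
    exact ⟨-q, ofCoords_neg q⟩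
  | mul M N _ _ hM hN =>
    obtain ⟨⟨q, rfl⟩, ⟨q', rfl⟩⟩ := And.intro hM hN
    exact ⟨_, (ofCoords_mul q q').symm⟩

def ofCoordsZModTwo : Coords (ZMod 2) → Matrix (Fin 2) (Fin 2) (ZMod 2)
  | (a, b, c, d) => a • 1 + b • !![0, 1; 1, 1] + c • !![0, 1; 1, 0] +
      d • (!![0, 1; 1, 1] * !![0, 1; 1, 0])

lemma ofCoordsZModTwo_add :
    ∀ q q', ofCoordsZModTwo (q + q') = ofCoordsZModTwo q + ofCoordsZModTwo q' := by
  decide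

lemma ofCoordsZModTwo_quatMul :
    ∀ q q', ofCoordsZModTwo (quatMul 1 q q') = ofCoordsZModTwo q * ofCoordsZModTwo q' := by
  decide

lemma ofCoordsZModTwo_bijective : Function.Bijective ofCoordsZModTwo := by
  decide

noncomputable def reduceModOneAddI : Matrix (Fin 2) (Fin 2) ℂ → Matrix (Fin 2) (Fin 2) (ZMod 2) :=
  Function.extend ofCoords (fun q => ofCoordsZModTwo (mapCoords toZModTwo q)) 0

lemma reduceModOneAddI_ofCoords (q : Coords ℤ[i]) :
    reduceModOneAddI (ofCoords q) = ofCoordsZModTwo (mapCoords toZModTwo q) :=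
  ofCoords_injective.extend_apply _ _ q

noncomputable def reduceOO : OO →+* Matrix (Fin 2) (Fin 2) (ZMod 2) where
  toFun x := reduceModOneAddI x
  map_one' := by
    rw [OneMemClass.coe_one, ← ofCoords_one, reduceModOneAddI_ofCoords]
    decide
  map_zero' := by
    rw [ZeroMemClass.coe_zero, ← ofCoords_zero, reduceModOneAddI_ofCoords]
    decide
  map_mul' x y := by
    obtain ⟨⟨q, hq⟩, ⟨q', hq'⟩⟩ := And.intro (mem_OO_iff.1 x.2) (mem_OO_iff.1 y.2)
    rw [Subring.coe_mul, ← hq, ← hq', ofCoords_mul, reduceModOneAddI_ofCoords,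
      reduceModOneAddI_ofCoords, reduceModOneAddI_ofCoords, mapCoords_quatMul, toZModTwo_sqrtd,
      ofCoordsZModTwo_quatMul]
  map_add' x y := by
    obtain ⟨⟨q, hq⟩, ⟨q', hq'⟩⟩ := And.intro (mem_OO_iff.1 x.2) (mem_OO_iff.1 y.2)
    rw [Subring.coe_add, ← hq, ← hq', ← ofCoords_add, reduceModOneAddI_ofCoords,
      reduceModOneAddI_ofCoords, reduceModOneAddI_ofCoords, mapCoords_add, ofCoordsZModTwo_add]

lemma reduceOO_mk {M : Matrix (Fin 2) (Fin 2) ℂ} (hM : M ∈ OO) :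
    reduceOO ⟨M, hM⟩ = reduceModOneAddI M := rfl

lemma reduceOO_surjective : Function.Surjective reduceOO := by
  intro m
  obtain ⟨p, rfl⟩ := ofCoordsZModTwo_bijective.2 m
  obtain ⟨q, rfl⟩ := mapCoords_surjective toZModTwo_surjective p
  exact ⟨⟨ofCoords q, ofCoords_mem_OO q⟩, reduceModOneAddI_ofCoords q⟩

lemma mapCoords_toZModTwo_eq_zero_iff {q : Coords ℤ[i]} :
    mapCoords toZModTwo q = 0 ↔ ∃ q', q = (1 + sqrtd : ℤ[i]) • q' := by
  constructor
  · intro h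
    obtain ⟨a, b, c, d⟩ := q
    simp only [mapCoords, Prod.mk_eq_zero, toZModTwo_eq_zero_iff] at h
    obtain ⟨⟨a', rfl⟩, ⟨b', rfl⟩, ⟨c', rfl⟩, ⟨d', rfl⟩⟩ := h
    exact ⟨(a', b', c', d'), rfl⟩
  · rintro ⟨q', rfl⟩
    rw [mapCoords_smul, toZModTwo_eq_zero_iff.2 dvd_rfl, zero_smul]

lemma ofCoords_one_add_sqrtd_smul (q : Coords ℤ[i]) :
    ofCoords ((1 + sqrtd : ℤ[i]) • q) = (1 + Complex.I) • ofCoords q := by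
  rw [ofCoords_smul, map_add, map_one, toComplex_sqrtd]

lemma reduceOO_eq_zero_iff (x : OO) :
    reduceOO x = 0 ↔ ∃ y : OO,
      (x : Matrix (Fin 2) (Fin 2) ℂ) = (1 + Complex.I) • (y : Matrix (Fin 2) (Fin 2) ℂ) := by
  obtain ⟨_, hM⟩ := x
  obtain ⟨q, rfl⟩ := mem_OO_iff.1 hM
  have hzero : ofCoordsZModTwo 0 = 0 := by decide
  rw [reduceOO_mk, reduceModOneAddI_ofCoords, ofCoordsZModTwo_bijective.1.eq_iff' hzero,
    mapCoords_toZModTwo_eq_zero_iff]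
  constructor
  · rintro ⟨q', rfl⟩
    exact ⟨⟨ofCoords q', ofCoords_mem_OO q'⟩, ofCoords_one_add_sqrtd_smul q'⟩
  · rintro ⟨⟨_, hN⟩, hy⟩
    obtain ⟨q', rfl⟩ := mem_OO_iff.1 hN
    exact ⟨q', ofCoords_injective (hy.trans (ofCoords_one_add_sqrtd_smul q').symm)⟩

/-- The quotient `𝒪/(1+i)𝒪` is isomorphic to `M₂(𝔽₂)`: there is a surjective ring
homomorphism `ψ : 𝒪 → M₂(𝔽₂)` whose kernel is exactly `(1+i)𝒪`, determined by
`θ ↦ [[0,1],[1,1]]`, `j ↦ [[0,1],[1,0]]` (hence `θj` maps to their product, and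
`i·𝟙 ↦ I` since `i ≡ 1 mod (1+i)`). -/
theorem quotient_O_one_add_i :
    ∃ ψ : OO →+* Matrix (Fin 2) (Fin 2) (ZMod 2),
      Function.Surjective ψ ∧
      (∀ x : OO, ψ x = 0 ↔ ∃ y : OO,
        (x : Matrix (Fin 2) (Fin 2) ℂ) = (1 + Complex.I) • (y : Matrix (Fin 2) (Fin 2) ℂ)) ∧
      (∀ h : Tmat ∈ OO, ψ ⟨Tmat, h⟩ = !![0, 1; 1, 1]) ∧
      (∀ h : Jmat ∈ OO, ψ ⟨Jmat, h⟩ = !![0, 1; 1, 0]) ∧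
      (∀ h : Tmat * Jmat ∈ OO, ψ ⟨Tmat * Jmat, h⟩ = !![0, 1; 1, 1] * !![0, 1; 1, 0]) ∧
      (∀ h : iOne ∈ OO, ψ ⟨iOne, h⟩ = 1) := by
  refine ⟨reduceOO, reduceOO_surjective, reduceOO_eq_zero_iff, fun _ => ?_, fun _ => ?_,
    fun _ => ?_, fun _ => ?_⟩ <;> rw [reduceOO_mk]
  · rw [← ofCoords_Tmat, reduceModOneAddI_ofCoords]
    decide
  · rw [← ofCoords_Jmat, reduceModOneAddI_ofCoords]
    decide
  · rw [← ofCoords_Tmat_mul_Jmat, reduceModOneAddI_ofCoords]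
    decide
  · rw [← ofCoords_iOne, reduceModOneAddI_ofCoords]
    decide
end
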